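/- arXiv:1303.3556 — 2 statements merged into one kernel-verified Lean document; each statement's English description precedes it below -/
import Mathlib

section
/- If a : ℕ → ℝ is an arithmetic function, S(x) = Σ_{n≤x} a(n), and there exist constants c > 0, C > 0 and X₀ such that for every X ≥ X₀ there exist x₁, x₂ ∈ [X, X + C·X^{3/4}] with S(x₁) > c·X^{3/8} and S(x₂) < -c·X^{3/8}, and moreover |a(n)| ≤ d₄(n) for all n, then for every ε > 0 there is an absolute constant c' such that for all sufficiently large x, the number of n in (x, x + 3C·x^{3/4}] with a(n) > 0 is ≫_ε x^{3/8-ε}, and likewise the number of n in this interval with a(n) < 0 is ≫_ε x^{3/8-ε}. -/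
/-!
Apply the oscillation hypothesis at `X = x` and at `X' = x + C x^{3/4}`: `S` drops below
`-c x^{3/8}` somewhere in `[x, X']` and exceeds `c x^{3/8}` somewhere in
`[X', X' + C X'^{3/4}] ⊆ [x, x + 3 C x^{3/4}]` (once `x ≥ C⁴`), so the terms `a(n)` in between
sum to at least `2 c x^{3/8}`. Each of them is at most `d₄(n) ≪_ε x^ε`, so at least
`≫_ε x^{3/8-ε}` of them are positive. The same argument for `-a` gives the negative terms.
-/

open Finset

/-- `d₄ n`: number of quadruples `(a,b,c,d)` of positive integers with `a*b*c*d = n`. -/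
def d4 (n : ℕ) : ℕ :=
  ((Finset.Icc 1 n ×ˢ Finset.Icc 1 n ×ˢ Finset.Icc 1 n ×ˢ Finset.Icc 1 n).filter
    (fun p => p.1 * p.2.1 * p.2.2.1 * p.2.2.2 = n)).card

/-- Summatory function `S(x) = ∑_{n ≤ x} a(n)`. -/
noncomputable def Ssum (a : ℕ → ℝ) (x : ℝ) : ℝ := ∑ n ∈ Finset.Icc 1 ⌊x⌋₊, a n

lemma exists_add_one_le_mul_pow {r : ℝ} (hr : 1 < r) :
    ∃ K : ℝ, 1 ≤ K ∧ ∀ m : ℕ, (m + 1 : ℝ) ≤ K * r ^ m := by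
  refine ⟨max 1 (r - 1)⁻¹, le_max_left _ _, fun m => ?_⟩
  have hr1 : 0 < r - 1 := by linarith
  have hK : 1 ≤ max 1 (r - 1)⁻¹ * (r - 1) :=
    calc 1 = (r - 1)⁻¹ * (r - 1) := (inv_mul_cancel₀ hr1.ne').symm
      _ ≤ _ := by gcongr; exact le_max_right _ _
  calc (m + 1 : ℝ) ≤ max 1 (r - 1)⁻¹ * (1 + m * (r - 1)) := by
        nlinarith [le_max_left 1 (r - 1)⁻¹, (m.cast_nonneg : (0 : ℝ) ≤ m)]
    _ ≤ max 1 (r - 1)⁻¹ * r ^ m := by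
        gcongr
        simpa using one_add_mul_le_pow (by linarith : (-2 : ℝ) ≤ r - 1) m

lemma card_divisors_le_mul_rpow {ε : ℝ} (hε : 0 < ε) :
    ∃ K : ℝ, 1 ≤ K ∧ ∀ n : ℕ, n ≠ 0 → (#n.divisors : ℝ) ≤ K * (n : ℝ) ^ ε := by
  obtain ⟨K, hK1, hK⟩ := exists_add_one_le_mul_pow (Real.one_lt_rpow one_lt_two hε)
  set B := ⌈(2 : ℝ) ^ ε⁻¹⌉₊
  have hB : ∀ p : ℕ, B ≤ p → 2 ≤ (p : ℝ) ^ ε := fun p hp => by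
    have h : (2 : ℝ) ^ ε⁻¹ ≤ p := (Nat.le_ceil _).trans (by exact_mod_cast hp)
    calc (2 : ℝ) = ((2 : ℝ) ^ ε⁻¹) ^ ε := by
          rw [← Real.rpow_mul zero_le_two, inv_mul_cancel₀ hε.ne', Real.rpow_one]
      _ ≤ (p : ℝ) ^ ε := by gcongr
  -- only the finitely many primes `p < B` cost a factor `K`
  have hfactor : ∀ p : ℕ, p.Prime → ∀ m : ℕ,
      (m + 1 : ℝ) ≤ (if p < B then K else 1) * ((p : ℝ) ^ m) ^ ε := by
    intro p hp m
    have hp2 : (2 : ℝ) ≤ p := by exact_mod_cast hp.two_le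
    rw [← Real.rpow_pow_comm p.cast_nonneg]
    split_ifs with hpB
    · calc (m + 1 : ℝ) ≤ K * ((2 : ℝ) ^ ε) ^ m := hK m
        _ ≤ K * ((p : ℝ) ^ ε) ^ m := by gcongr
    · calc (m + 1 : ℝ) ≤ 2 ^ m := by exact_mod_cast Nat.lt_two_pow_self
        _ ≤ 1 * ((p : ℝ) ^ ε) ^ m := by rw [one_mul]; gcongr; exact hB p (not_lt.1 hpB)
  refine ⟨K ^ B, one_le_pow₀ hK1, fun n hn => ?_⟩
  calc (#n.divisors : ℝ) = ∏ p ∈ n.primeFactors, ((n.factorization p : ℝ) + 1) := by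
        rw [Nat.card_divisors hn]; push_cast; rfl
    _ ≤ ∏ p ∈ n.primeFactors, (if p < B then K else 1) * ((p : ℝ) ^ n.factorization p) ^ ε :=
        prod_le_prod (fun _ _ => by positivity)
          (fun p hp => hfactor p (Nat.prime_of_mem_primeFactors hp) _)
    _ = K ^ #{p ∈ n.primeFactors | p < B} * (n : ℝ) ^ ε := by
        rw [prod_mul_distrib, ← prod_filter, prod_const,
          Real.finsetProd_rpow _ _ (fun _ _ => by positivity)]
        congr 2
        exact_mod_cast Nat.prod_factorization_pow_eq_self hn
    _ ≤ K ^ B * (n : ℝ) ^ ε := by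
        have hcard : #{p ∈ n.primeFactors | p < B} ≤ B := by
          simpa using card_le_card (fun p hp => mem_range.2 (mem_filter.1 hp).2 :
            {p ∈ n.primeFactors | p < B} ⊆ range B)
        gcongr

lemma d4_le_card_divisors_pow (n : ℕ) : d4 n ≤ #n.divisors ^ 4 := by
  rcases eq_or_ne n 0 with rfl | hn
  · simp [d4]
  have hsub : {p ∈ Icc 1 n ×ˢ Icc 1 n ×ˢ Icc 1 n ×ˢ Icc 1 n |
      p.1 * p.2.1 * p.2.2.1 * p.2.2.2 = n} ⊆
      n.divisors ×ˢ n.divisors ×ˢ n.divisors ×ˢ n.divisors := by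
    rintro ⟨a, b, c, d⟩ h
    obtain ⟨-, rfl⟩ := mem_filter.1 h
    simp only [mem_product, Nat.mem_divisors, ne_eq, hn, not_false_eq_true, and_true]
    exact ⟨⟨b * c * d, by ring⟩, ⟨a * c * d, by ring⟩, ⟨a * b * d, by ring⟩, ⟨a * b * c, by ring⟩⟩
  calc d4 n ≤ #(n.divisors ×ˢ n.divisors ×ˢ n.divisors ×ˢ n.divisors) := card_le_card hsub
    _ = #n.divisors ^ 4 := by simp only [card_product]; ring

lemma d4_le_mul_rpow {ε : ℝ} (hε : 0 < ε) :
    ∃ K : ℝ, 0 < K ∧ ∀ n : ℕ, n ≠ 0 → (d4 n : ℝ) ≤ K * (n : ℝ) ^ ε := by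
  obtain ⟨K, hK1, hK⟩ := card_divisors_le_mul_rpow (by positivity : 0 < ε / 4)
  refine ⟨K ^ 4, by positivity, fun n hn => ?_⟩
  calc (d4 n : ℝ) ≤ (#n.divisors : ℝ) ^ 4 := by exact_mod_cast d4_le_card_divisors_pow n
    _ ≤ (K * (n : ℝ) ^ (ε / 4)) ^ 4 := by gcongr; exact hK n hn
    _ = K ^ 4 * (n : ℝ) ^ ε := by
        rw [mul_pow, ← Real.rpow_mul_natCast n.cast_nonneg]; norm_num

lemma Ssum_sub_Ssum (a : ℕ → ℝ) {y z : ℝ} (h : ⌊y⌋₊ ≤ ⌊z⌋₊) :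
    Ssum a z - Ssum a y = ∑ n ∈ Ioc ⌊y⌋₊ ⌊z⌋₊, a n := by
  have hIcc : ∀ m : ℕ, Icc 1 m = Ioc 0 m := Icc_add_one_left_eq_Ioc 0
  rw [Ssum, Ssum, hIcc, hIcc, ← sum_Ioc_consecutive a (Nat.zero_le _) h, add_sub_cancel_left]

lemma Ssum_neg (a : ℕ → ℝ) (x : ℝ) : Ssum (fun n => -a n) x = -Ssum a x := by
  simp [Ssum]

lemma sum_le_card_filter_pos_mul {ι : Type*} {f : ι → ℝ} {s : Finset ι} {B : ℝ}
    (hB : ∀ i ∈ s, f i ≤ B) : ∑ i ∈ s, f i ≤ #{i ∈ s | 0 < f i} * B := by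
  calc ∑ i ∈ s, f i ≤ ∑ i ∈ s, if 0 < f i then f i else 0 :=
        sum_le_sum fun i _ => by split_ifs with h <;> linarith
    _ = ∑ i ∈ s with 0 < f i, f i := (sum_filter _ _).symm
    _ ≤ #{i ∈ s | 0 < f i} * B := by
        simpa using sum_le_card_nsmul _ _ B fun i hi => hB i (mem_filter.1 hi).1

lemma mul_rpow_three_quarters_le {C x : ℝ} (hC : 0 ≤ C) (hx : C ^ 4 ≤ x) :
    C * x ^ ((3 : ℝ) / 4) ≤ x := by
  have hx0 : 0 ≤ x := (by positivity : 0 ≤ C ^ 4).trans hx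
  have hCx : C ≤ x ^ ((1 : ℝ) / 4) := by
    calc C = (C ^ 4) ^ ((1 : ℝ) / 4) := by
          rw [← Real.rpow_natCast, ← Real.rpow_mul hC]; norm_num
      _ ≤ x ^ ((1 : ℝ) / 4) := by gcongr
  calc C * x ^ ((3 : ℝ) / 4) ≤ x ^ ((1 : ℝ) / 4) * x ^ ((3 : ℝ) / 4) := by gcongr
    _ = x := by rw [← Real.rpow_add' hx0 (by norm_num)]; norm_num

lemma add_mul_rpow_three_quarters_le {C x : ℝ} (hC : 0 ≤ C) (hx : C ^ 4 ≤ x) :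
    (x + C * x ^ ((3 : ℝ) / 4)) + C * (x + C * x ^ ((3 : ℝ) / 4)) ^ ((3 : ℝ) / 4) ≤
      x + 3 * C * x ^ ((3 : ℝ) / 4) := by
  have hx0 : 0 ≤ x := (by positivity : 0 ≤ C ^ 4).trans hx
  have h2x : x + C * x ^ ((3 : ℝ) / 4) ≤ 2 * x := by
    linarith [mul_rpow_three_quarters_le hC hx]
  have hpow : (x + C * x ^ ((3 : ℝ) / 4)) ^ ((3 : ℝ) / 4) ≤ 2 * x ^ ((3 : ℝ) / 4) :=
    calc (x + C * x ^ ((3 : ℝ) / 4)) ^ ((3 : ℝ) / 4) ≤ (2 * x) ^ ((3 : ℝ) / 4) := by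
          gcongr
      _ = 2 ^ ((3 : ℝ) / 4) * x ^ ((3 : ℝ) / 4) := Real.mul_rpow zero_le_two hx0
      _ ≤ 2 * x ^ ((3 : ℝ) / 4) := by
          gcongr
          exact Real.rpow_le_self_of_one_le one_le_two (by norm_num)
  nlinarith

lemma le_card_filter_pos {a : ℕ → ℝ} {c K ε θ x y z U : ℝ} (hK : 0 < K) (hε : 0 ≤ ε)
    (hbound : ∀ n : ℕ, n ≠ 0 → |a n| ≤ K * (n : ℝ) ^ ε) (hx : 0 < x) (hxy : x ≤ y)
    (hyz : y ≤ z) (hzU : z ≤ U) (hU : U ≤ 4 * x) (hjump : c * x ^ θ ≤ Ssum a z - Ssum a y) :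
    c / (K * 4 ^ ε) * x ^ (θ - ε) ≤ #{n ∈ Ioc ⌊x⌋₊ ⌊U⌋₊ | 0 < a n} := by
  have hB : ∀ n ∈ Ioc ⌊y⌋₊ ⌊z⌋₊, a n ≤ K * (4 * x) ^ ε := by
    intro n hn
    obtain ⟨hyn, hnz⟩ := mem_Ioc.1 hn
    have hn4x : (n : ℝ) ≤ 4 * x :=
      ((Nat.le_floor_iff (by linarith)).1 hnz).trans (hzU.trans hU)
    calc a n ≤ |a n| := le_abs_self _
      _ ≤ K * (n : ℝ) ^ ε := hbound n (by omega)
      _ ≤ K * (4 * x) ^ ε := by gcongr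
  have hsub : #{n ∈ Ioc ⌊y⌋₊ ⌊z⌋₊ | 0 < a n} ≤ #{n ∈ Ioc ⌊x⌋₊ ⌊U⌋₊ | 0 < a n} :=
    card_le_card (filter_subset_filter _
      (Ioc_subset_Ioc (Nat.floor_le_floor hxy) (Nat.floor_le_floor hzU)))
  have hscale : c / (K * 4 ^ ε) * x ^ (θ - ε) * (K * (4 * x) ^ ε) = c * x ^ θ := by
    rw [Real.mul_rpow (by norm_num) hx.le]
    field_simp
    rw [mul_assoc, ← Real.rpow_add hx, sub_add_cancel]
  refine le_of_mul_le_mul_right ?_ (by positivity : 0 < K * (4 * x) ^ ε)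
  calc c / (K * 4 ^ ε) * x ^ (θ - ε) * (K * (4 * x) ^ ε) = c * x ^ θ := hscale
    _ ≤ Ssum a z - Ssum a y := hjump
    _ = ∑ n ∈ Ioc ⌊y⌋₊ ⌊z⌋₊, a n := Ssum_sub_Ssum a (Nat.floor_le_floor hyz)
    _ ≤ #{n ∈ Ioc ⌊y⌋₊ ⌊z⌋₊ | 0 < a n} * (K * (4 * x) ^ ε) := sum_le_card_filter_pos_mul hB
    _ ≤ #{n ∈ Ioc ⌊x⌋₊ ⌊U⌋₊ | 0 < a n} * (K * (4 * x) ^ ε) := by gcongr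

theorem stmt2 (a : ℕ → ℝ) (c C X₀ : ℝ) (hc : 0 < c) (hC : 0 < C)
    (hbound : ∀ n : ℕ, |a n| ≤ (d4 n : ℝ))
    (hosc : ∀ X ≥ X₀,
      ∃ x₁ ∈ Set.Icc X (X + C * X ^ ((3:ℝ)/4)),
      ∃ x₂ ∈ Set.Icc X (X + C * X ^ ((3:ℝ)/4)),
        Ssum a x₁ > c * X ^ ((3:ℝ)/8) ∧ Ssum a x₂ < -c * X ^ ((3:ℝ)/8)) :
    ∀ ε > (0:ℝ), ∃ c' > (0:ℝ), ∃ x₀ : ℝ, ∀ x ≥ x₀,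
      c' * x ^ ((3:ℝ)/8 - ε) ≤
        (((Finset.Ioc ⌊x⌋₊ ⌊x + 3 * C * x ^ ((3:ℝ)/4)⌋₊).filter (fun n => 0 < a n)).card : ℝ) ∧
      c' * x ^ ((3:ℝ)/8 - ε) ≤
        (((Finset.Ioc ⌊x⌋₊ ⌊x + 3 * C * x ^ ((3:ℝ)/4)⌋₊).filter (fun n => a n < 0)).card : ℝ) := by
  intro ε hε
  obtain ⟨K, hK, hd4⟩ := d4_le_mul_rpow hε
  have hbound' : ∀ n : ℕ, n ≠ 0 → |a n| ≤ K * (n : ℝ) ^ ε := fun n hn =>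
    (hbound n).trans (hd4 n hn)
  refine ⟨c / (K * 4 ^ ε), by positivity, max X₀ (C ^ 4), fun x hx => ?_⟩
  have hxC : C ^ 4 ≤ x := le_of_max_le_right hx
  have hx0 : 0 < x := (by positivity : 0 < C ^ 4).trans_le hxC
  have hU : x + 3 * C * x ^ ((3 : ℝ) / 4) ≤ 4 * x := by
    linarith [mul_rpow_three_quarters_le hC.le hxC]
  have hwindow := add_mul_rpow_three_quarters_le hC.le hxC
  set X' := x + C * x ^ ((3 : ℝ) / 4)
  have hxX' : x ≤ X' := le_add_of_nonneg_right (by positivity)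
  obtain ⟨x₁, hx₁, x₂, hx₂, hSx₁, hSx₂⟩ := hosc x (le_of_max_le_left hx)
  obtain ⟨y₁, hy₁, y₂, hy₂, hSy₁, hSy₂⟩ := hosc X' ((le_of_max_le_left hx).trans hxX')
  have hmono : c * x ^ ((3 : ℝ) / 8) ≤ c * X' ^ ((3 : ℝ) / 8) := by gcongr
  have hpos : 0 ≤ c * x ^ ((3 : ℝ) / 8) := by positivity
  constructor
  · exact le_card_filter_pos hK hε.le hbound' hx0 hx₂.1 (hx₂.2.trans hy₁.1)
      (hy₁.2.trans hwindow) hU (by linarith)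
  · simpa only [neg_pos] using le_card_filter_pos (a := fun n => -a n) hK hε.le
      (by simpa only [abs_neg] using hbound') hx0 hx₁.1 (hx₁.2.trans hy₂.1)
      (hy₂.2.trans hwindow) hU (by rw [Ssum_neg, Ssum_neg]; linarith)
end

section
/- Suppose the partial sums S(x) = Σ_{n ≤ x} a(n) of a real arithmetic function satisfy S(x) ≪ x^{3/5+ε} for all ε > 0. Then for any fixed β > 0, the series Σ_{n≥1} (a(n)/n^{7/8})·sin(4√(2π)·n^{1/4}·v + π/4) converges uniformly for v in any compact subset of (0, ∞). -/
/-!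
Summation by parts with `S(n) = ∑_{1 ≤ i ≤ n} a(i)` turns the series into
`S(N) φ(N+1) + ∑_{n ≤ N} S(n) (φ(n) - φ(n+1))`, where `φ(n) = n^{-σ} sin(c n^τ v + δ)`.
The mean value theorem gives `φ(n) - φ(n+1) = O((1 + |v|) n^{τ-σ-1})`, so with `S(n) = O(n^α)`
the boundary term tends to `0` uniformly when `α < σ`, and the new series is dominated by a
convergent `∑ n^{α+τ-σ-1}` when `α + τ < σ` (the Weierstrass M-test). Here `σ = 7/8`, `τ = 1/4`
and `α = 3/5 + ε` with any `ε < 1/40`.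
-/

open Real Filter Topology Finset

def partialSum (a : ℕ → ℝ) (n : ℕ) : ℝ := ∑ i ∈ Icc 1 n, a i

@[simp]
lemma partialSum_zero (a : ℕ → ℝ) : partialSum a 0 = 0 := by
  simp [partialSum]

lemma partialSum_succ (a : ℕ → ℝ) (n : ℕ) : partialSum a (n + 1) = partialSum a n + a (n + 1) :=
  sum_Icc_succ_top (by omega) a

lemma sum_Icc_mul_eq_partialSum_mul_add_sum (a φ : ℕ → ℝ) (N : ℕ) :
    ∑ n ∈ Icc 1 N, a n * φ n = partialSum a N * φ (N + 1)
      + ∑ n ∈ range (N + 1), partialSum a n * (φ n - φ (n + 1)) := by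
  induction N with
  | zero => simp
  | succ N ih =>
    rw [sum_Icc_succ_top (by omega), ih, sum_range_succ _ (N + 1), partialSum_succ]
    ring

lemma tendstoUniformlyOn_zero_of_abs_le {ι α : Type*} {l : Filter α} {F : α → ι → ℝ}
    {s : Set ι} {b : α → ℝ} (hb : Tendsto b l (𝓝 0)) (hF : ∀ n, ∀ x ∈ s, |F n x| ≤ b n) :
    TendstoUniformlyOn F 0 l s :=
  Metric.tendstoUniformlyOn_iff.2 fun ε hε =>
    (hb.eventually (gt_mem_nhds hε)).mono fun n hn x hx => by
      simpa [dist_zero_left] using (hF n x hx).trans_lt hn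

theorem tendstoUniformlyOn_sum_Icc_mul {ι : Type*} {a : ℕ → ℝ} {φ : ℕ → ι → ℝ} {s : Set ι}
    {u : ℕ → ℝ}
    (hbdry : TendstoUniformlyOn (fun N x => partialSum a N * φ (N + 1) x) 0 atTop s)
    (hu : Summable u) (hdiff : ∀ n, ∀ x ∈ s, |partialSum a n * (φ n x - φ (n + 1) x)| ≤ u n) :
    TendstoUniformlyOn (fun N x => ∑ n ∈ Icc 1 N, a n * φ n x)
      (fun x => ∑' n, partialSum a n * (φ n x - φ (n + 1) x)) atTop s := by
  have hseries : TendstoUniformlyOn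
      (fun N x => ∑ n ∈ range (N + 1), partialSum a n * (φ n x - φ (n + 1) x))
      (fun x => ∑' n, partialSum a n * (φ n x - φ (n + 1) x)) atTop s :=
    fun v hv => (tendsto_add_atTop_nat 1).eventually (tendstoUniformlyOn_tsum_nat hu hdiff v hv)
  have hsum := hbdry.add hseries
  rw [zero_add] at hsum
  refine hsum.congr (Eventually.of_forall fun N x _ => ?_)
  simp [sum_Icc_mul_eq_partialSum_mul_add_sum a (φ · x)]

lemma abs_add_one_rpow_sub_rpow_le {p x : ℝ} (hp : p ≤ 1) (hx : 0 < x) :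
    |(x + 1) ^ p - x ^ p| ≤ |p| * x ^ (p - 1) := by
  have hderiv : ∀ y ∈ Set.Icc x (x + 1),
      HasDerivWithinAt (· ^ p) (p * y ^ (p - 1)) (Set.Icc x (x + 1)) y :=
    fun y hy => (hasDerivAt_rpow_const (Or.inl (hx.trans_le hy.1).ne')).hasDerivWithinAt
  have hbound : ∀ y ∈ Set.Icc x (x + 1), ‖p * y ^ (p - 1)‖ ≤ |p| * x ^ (p - 1) := by
    intro y hy
    rw [norm_mul, norm_eq_abs, norm_of_nonneg (rpow_nonneg (hx.le.trans hy.1) _)]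
    exact mul_le_mul_of_nonneg_left (rpow_le_rpow_of_nonpos hx hy.1 (by linarith)) (abs_nonneg p)
  simpa using (convex_Icc x (x + 1)).norm_image_sub_le_of_norm_hasDerivWithin_le hderiv hbound
    (Set.left_mem_Icc.2 (by linarith)) (Set.right_mem_Icc.2 (by linarith))

lemma abs_sin_div_rpow_sub_le {σ τ : ℝ} (hσ : 0 ≤ σ) (hτ₀ : 0 ≤ τ) (hτ₁ : τ ≤ 1)
    (c t δ : ℝ) {x : ℝ} (hx : 1 ≤ x) :
    |sin (c * x ^ τ * t + δ) / x ^ σ - sin (c * (x + 1) ^ τ * t + δ) / (x + 1) ^ σ|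
      ≤ (σ + τ * |c * t|) * x ^ (τ - σ - 1) := by
  have hx₀ : 0 < x := by linarith
  set θ := c * x ^ τ * t + δ
  set θ' := c * (x + 1) ^ τ * t + δ
  have hweight : |x ^ (-σ) - (x + 1) ^ (-σ)| ≤ σ * x ^ (-σ - 1) := by
    rw [abs_sub_comm]
    simpa [abs_of_nonneg hσ] using abs_add_one_rpow_sub_rpow_le (by linarith : -σ ≤ 1) hx₀
  have hphase : |sin θ - sin θ'| ≤ |c * t| * (τ * x ^ (τ - 1)) := by
    have hdiff : θ - θ' = -(c * t) * ((x + 1) ^ τ - x ^ τ) := by ring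
    refine (abs_sin_sub_sin_le θ θ').trans ?_
    rw [hdiff, abs_mul, abs_neg]
    gcongr
    simpa [abs_of_nonneg hτ₀] using abs_add_one_rpow_sub_rpow_le hτ₁ hx₀
  have hsplit : sin θ / x ^ σ - sin θ' / (x + 1) ^ σ
      = sin θ * (x ^ (-σ) - (x + 1) ^ (-σ)) + (sin θ - sin θ') * (x + 1) ^ (-σ) := by
    rw [rpow_neg hx₀.le, rpow_neg (by linarith)]
    ring
  have hdecay : (x + 1) ^ (-σ) ≤ x ^ (-σ) := rpow_le_rpow_of_nonpos hx₀ (by linarith) (by linarith)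
  calc |sin θ / x ^ σ - sin θ' / (x + 1) ^ σ|
      ≤ 1 * (σ * x ^ (-σ - 1)) + |c * t| * (τ * x ^ (τ - 1)) * x ^ (-σ) := by
        rw [hsplit]
        refine (abs_add_le _ _).trans (add_le_add ?_ ?_) <;> rw [abs_mul]
        · exact mul_le_mul (abs_sin_le_one θ) hweight (abs_nonneg _) zero_le_one
        · rw [abs_of_nonneg (rpow_nonneg (by linarith) _ : (0 : ℝ) ≤ (x + 1) ^ (-σ))]
          exact mul_le_mul hphase hdecay (by positivity) (by positivity)
    _ = σ * x ^ (-σ - 1) + τ * |c * t| * x ^ (τ - σ - 1) := by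
        rw [show τ - σ - 1 = (τ - 1) + -σ by ring, rpow_add hx₀]
        ring
    _ ≤ σ * x ^ (τ - σ - 1) + τ * |c * t| * x ^ (τ - σ - 1) := by
        gcongr
        linarith
    _ = (σ + τ * |c * t|) * x ^ (τ - σ - 1) := by ring

lemma exists_abs_partialSum_le_mul_rpow {a : ℕ → ℝ} {θ K : ℝ}
    (h : ∀ x : ℝ, 2 ≤ x → |∑ n ∈ Icc 1 ⌊x⌋₊, a n| ≤ K * x ^ θ) :
    ∃ K', 0 ≤ K' ∧ ∀ n : ℕ, |partialSum a n| ≤ K' * (n : ℝ) ^ θ := by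
  refine ⟨max K |a 1|, (abs_nonneg _).trans (le_max_right _ _), fun n => ?_⟩
  rcases lt_trichotomy n 1 with hn | rfl | hn
  · obtain rfl : n = 0 := by omega
    simp only [partialSum_zero, abs_zero]
    exact mul_nonneg ((abs_nonneg _).trans (le_max_right _ _)) (by positivity)
  · simp [partialSum]
  · have hn₂ : (2 : ℝ) ≤ n := by exact_mod_cast hn
    calc |partialSum a n| ≤ K * (n : ℝ) ^ θ := by simpa [partialSum] using h n hn₂
      _ ≤ max K |a 1| * (n : ℝ) ^ θ := by gcongr; exact le_max_left _ _

theorem exists_tendstoUniformlyOn_sum_div_rpow_mul_sin {a : ℕ → ℝ} {α σ τ K : ℝ}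
    (hα : 0 ≤ α) (hτ₀ : 0 ≤ τ) (hτ₁ : τ ≤ 1) (hατσ : α + τ < σ) (hK : 0 ≤ K)
    (hA : ∀ n : ℕ, |partialSum a n| ≤ K * (n : ℝ) ^ α) (c δ : ℝ) {s : Set ℝ}
    (hs : Bornology.IsBounded s) :
    ∃ g : ℝ → ℝ, TendstoUniformlyOn
      (fun (N : ℕ) (t : ℝ) => ∑ n ∈ Icc 1 N, a n / (n : ℝ) ^ σ * sin (c * (n : ℝ) ^ τ * t + δ))
      g atTop s := by
  obtain ⟨V, hV₀, hV⟩ := hs.exists_pos_norm_le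
  set φ : ℕ → ℝ → ℝ := fun n t => sin (c * (n : ℝ) ^ τ * t + δ) / (n : ℝ) ^ σ with hφ
  have hσ : 0 ≤ σ := by linarith
  have hbdry : TendstoUniformlyOn (fun N t => partialSum a N * φ (N + 1) t) 0 atTop s := by
    refine tendstoUniformlyOn_zero_of_abs_le (b := fun N => K * ((N : ℝ) + 1) ^ (α - σ)) ?_ ?_
    · simpa using ((tendsto_rpow_neg_atTop (by linarith : 0 < σ - α)).comp
        (tendsto_atTop_add_const_right _ 1 tendsto_natCast_atTop_atTop)).const_mul K
    · intro N t _
      have hN : (0 : ℝ) < N + 1 := by positivity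
      calc |partialSum a N * φ (N + 1) t|
          ≤ K * ((N : ℝ) + 1) ^ α * (1 / ((N : ℝ) + 1) ^ σ) := by
            rw [abs_mul, hφ, abs_div, abs_of_pos (rpow_pos_of_pos (by positivity) _)]
            push_cast
            gcongr
            · exact (hA N).trans (by gcongr; linarith)
            · exact abs_sin_le_one _
        _ = K * ((N : ℝ) + 1) ^ (α - σ) := by rw [rpow_sub hN]; ring
  have hdiff : ∀ n, ∀ t ∈ s, |partialSum a n * (φ n t - φ (n + 1) t)|
      ≤ K * (σ + τ * (|c| * V)) * (n : ℝ) ^ (α + τ - σ - 1) := by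
    intro n t ht
    rcases n.eq_zero_or_pos with rfl | hn
    · simp only [partialSum_zero, zero_mul, abs_zero]
      positivity
    have hn₁ : (1 : ℝ) ≤ n := by exact_mod_cast hn
    have hct : |c * t| ≤ |c| * V := by
      rw [abs_mul]
      gcongr
      simpa using hV t ht
    calc |partialSum a n * (φ n t - φ (n + 1) t)|
        ≤ K * (n : ℝ) ^ α * ((σ + τ * (|c| * V)) * (n : ℝ) ^ (τ - σ - 1)) := by
          rw [abs_mul]
          gcongr
          · exact hA n
          · simpa [hφ] using (abs_sin_div_rpow_sub_le hσ hτ₀ hτ₁ c t δ hn₁).trans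
              (by gcongr)
      _ = K * (σ + τ * (|c| * V)) * (n : ℝ) ^ (α + τ - σ - 1) := by
          rw [show α + τ - σ - 1 = α + (τ - σ - 1) by ring, rpow_add (by linarith)]
          ring
  have hsum : Summable fun n : ℕ => K * (σ + τ * (|c| * V)) * (n : ℝ) ^ (α + τ - σ - 1) :=
    (summable_nat_rpow.2 (by linarith)).mul_left _
  refine ⟨_, (tendstoUniformlyOn_sum_Icc_mul hbdry hsum hdiff).congr
    (Eventually.of_forall fun N t _ => sum_congr rfl fun n _ => ?_)⟩
  simp only [hφ]
  ring

theorem stmt10 (a : ℕ → ℝ)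
    (hS : ∀ ε > (0:ℝ), ∃ K : ℝ, ∀ x : ℝ, 2 ≤ x →
      |∑ n ∈ Finset.Icc 1 ⌊x⌋₊, a n| ≤ K * x ^ ((3:ℝ)/5 + ε)) :
    ∀ s : Set ℝ, IsCompact s → s ⊆ Set.Ioi (0:ℝ) →
      ∃ g : ℝ → ℝ, TendstoUniformlyOn
        (fun (N : ℕ) (v : ℝ) => ∑ n ∈ Finset.Icc 1 N,
          a n / (n : ℝ) ^ ((7:ℝ)/8) *
            Real.sin (4 * Real.sqrt (2 * π) * (n : ℝ) ^ ((1:ℝ)/4) * v + π / 4))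
        g atTop s := by
  intro s hs _
  obtain ⟨K, hK⟩ := hS (1 / 80) (by norm_num)
  obtain ⟨K', hK', hA⟩ := exists_abs_partialSum_le_mul_rpow hK
  exact exists_tendstoUniformlyOn_sum_div_rpow_mul_sin (by norm_num) (by norm_num) (by norm_num)
    (by norm_num) hK' hA _ _ hs.isBounded
end
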